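/- Let S, P_A, P_B be unital complex algebras, σ_A, σ_B linear functionals on P_A, P_B, and Θ_A, Θ_B unital algebra automorphisms of S⊗P_A and S⊗P_B with extensions Θ̂_A, Θ̂_B to S⊗P_A⊗P_B (Θ̂_A acting on factors one and two, Θ̂_B on factors one and three). If Θ̂_A ∘ Θ̂_B = Θ̂_B ∘ Θ̂_A, then for all O_A ∈ P_A and O_B ∈ P_B: (id_S⊗σ_A⊗σ_B)((Θ̂_A ∘ Θ̂_B)(1⊗O_A⊗O_B)) = ε_A(O_A) · ε_B(O_B) in S, where ε_A(O) := (id_S⊗σ_A)(Θ_A(1⊗O)) and ε_B(O) := (id_S⊗σ_B)(Θ_B(1⊗O)). That is, the induced observable of the combined probe observable O_A⊗O_B is the product of the individual induced observables. -/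

import Mathlib

/-!
Write `1 ⊗ O_A ⊗ O_B = X * Y` with `X = 1 ⊗ O_A ⊗ 1`, fixed by `Θ̂_B`, and `Y = 1 ⊗ 1 ⊗ O_B`,
fixed by `Θ̂_A`. Then `Θ̂_A (Θ̂_B (X * Y)) = Θ̂_A X * Θ̂_A (Θ̂_B Y) = Θ̂_A X * Θ̂_B (Θ̂_A Y)
= Θ̂_A X * Θ̂_B Y` by commutation, i.e. `(Θ_A (1 ⊗ O_A)) ⊗ 1` times `Θ_B (1 ⊗ O_B)` placed on
factors one and three, and `id_S ⊗ σ_A ⊗ σ_B` is multiplicative on such products.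
-/

open scoped TensorProduct

noncomputable section

variable {S PA PB : Type*} [Ring S] [Algebra ℂ S]
  [Ring PA] [Algebra ℂ PA] [Ring PB] [Algebra ℂ PB]

/-- The tensor product `ω ⊗ σ` of two linear functionals, determined by
`(ω ⊗ σ)(a ⊗ b) = ω a * σ b`. -/
def tensorFunctional {A B : Type*} [Ring A] [Algebra ℂ A]
    [Ring B] [Algebra ℂ B] (ω : A →ₗ[ℂ] ℂ) (σ : B →ₗ[ℂ] ℂ) :
    A ⊗[ℂ] B →ₗ[ℂ] ℂ :=
  (TensorProduct.lid ℂ ℂ).toLinearMap.comp (TensorProduct.map ω σ)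

/-- The partial trace `id_S ⊗ σ : S ⊗ P →ₗ S`, determined by `a ⊗ b ↦ σ(b) • a`. -/
def idTensorFunctional (S : Type*) [Ring S] [Algebra ℂ S] {P : Type*}
    [Ring P] [Algebra ℂ P] (σ : P →ₗ[ℂ] ℂ) : S ⊗[ℂ] P →ₗ[ℂ] S :=
  (TensorProduct.rid ℂ S).toLinearMap.comp (TensorProduct.map LinearMap.id σ)

/-- The rearrangement isomorphism `(S ⊗ P_A) ⊗ P_B ≃ (S ⊗ P_B) ⊗ P_A`
exchanging the two probe factors. -/
def probeSwap (S PA PB : Type*) [Ring S] [Algebra ℂ S]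
    [Ring PA] [Algebra ℂ PA] [Ring PB] [Algebra ℂ PB] :
    ((S ⊗[ℂ] PA) ⊗[ℂ] PB) ≃ₐ[ℂ] ((S ⊗[ℂ] PB) ⊗[ℂ] PA) :=
  (Algebra.TensorProduct.assoc ℂ ℂ ℂ S PA PB).trans
    ((Algebra.TensorProduct.congr AlgEquiv.refl
        (Algebra.TensorProduct.comm ℂ PA PB)).trans
      (Algebra.TensorProduct.assoc ℂ ℂ ℂ S PB PA).symm)

/-- The extension `Θ̂_A` of an automorphism `Θ_A` of `S ⊗ P_A` to
`(S ⊗ P_A) ⊗ P_B`, acting trivially on `P_B`. -/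
def hatA (ΘA : (S ⊗[ℂ] PA) ≃ₐ[ℂ] (S ⊗[ℂ] PA)) :
    ((S ⊗[ℂ] PA) ⊗[ℂ] PB) ≃ₐ[ℂ] ((S ⊗[ℂ] PA) ⊗[ℂ] PB) :=
  Algebra.TensorProduct.congr ΘA AlgEquiv.refl

/-- The extension `Θ̂_B` of an automorphism `Θ_B` of `S ⊗ P_B` to
`(S ⊗ P_A) ⊗ P_B`, acting on the first and third tensor factors and trivially
on `P_A`. -/
def hatB (ΘB : (S ⊗[ℂ] PB) ≃ₐ[ℂ] (S ⊗[ℂ] PB)) :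
    ((S ⊗[ℂ] PA) ⊗[ℂ] PB) ≃ₐ[ℂ] ((S ⊗[ℂ] PA) ⊗[ℂ] PB) :=
  (probeSwap S PA PB).trans ((Algebra.TensorProduct.congr ΘB AlgEquiv.refl).trans
    (probeSwap S PA PB).symm)

/-- The induced system observable `ε(O) = (id_S ⊗ σ)(Θ (1 ⊗ O))` of a probe
observable `O`. -/
def inducedObservable {P : Type*} [Ring P] [Algebra ℂ P] (σ : P →ₗ[ℂ] ℂ)
    (Θ : (S ⊗[ℂ] P) ≃ₐ[ℂ] (S ⊗[ℂ] P)) (O : P) : S :=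
  idTensorFunctional S σ (Θ ((1 : S) ⊗ₜ[ℂ] O))

/-- The partial trace `id_S ⊗ σ_A ⊗ σ_B : S ⊗ P_A ⊗ P_B →ₗ S`, determined by
`a ⊗ b ⊗ c ↦ σ_A(b) σ_B(c) • a`. -/
def idTensorFunctional₂ (σA : PA →ₗ[ℂ] ℂ) (σB : PB →ₗ[ℂ] ℂ) :
    (S ⊗[ℂ] PA) ⊗[ℂ] PB →ₗ[ℂ] S :=
  (idTensorFunctional S σB).comp
    (TensorProduct.map (idTensorFunctional S σA) LinearMap.id)

@[simp]
lemma probeSwap_tmul (s : S) (a : PA) (b : PB) :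
    probeSwap S PA PB ((s ⊗ₜ[ℂ] a) ⊗ₜ[ℂ] b) = (s ⊗ₜ[ℂ] b) ⊗ₜ[ℂ] a := by
  simp [probeSwap, Algebra.TensorProduct.comm_tmul]

@[simp]
lemma probeSwap_symm_tmul (s : S) (a : PA) (b : PB) :
    (probeSwap S PA PB).symm ((s ⊗ₜ[ℂ] b) ⊗ₜ[ℂ] a) = (s ⊗ₜ[ℂ] a) ⊗ₜ[ℂ] b := by
  rw [AlgEquiv.symm_apply_eq, probeSwap_tmul]

@[simp]
lemma idTensorFunctional_tmul {P : Type*} [Ring P] [Algebra ℂ P]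
    (σ : P →ₗ[ℂ] ℂ) (s : S) (p : P) :
    idTensorFunctional S σ (s ⊗ₜ[ℂ] p) = σ p • s := by
  simp [idTensorFunctional]

lemma hatA_tmul (ΘA : (S ⊗[ℂ] PA) ≃ₐ[ℂ] (S ⊗[ℂ] PA)) (x : S ⊗[ℂ] PA) (b : PB) :
    hatA ΘA (x ⊗ₜ[ℂ] b) = ΘA x ⊗ₜ[ℂ] b :=
  rfl

lemma hatB_probeSwap_symm_tmul (ΘB : (S ⊗[ℂ] PB) ≃ₐ[ℂ] (S ⊗[ℂ] PB))
    (y : S ⊗[ℂ] PB) (a : PA) :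
    hatB ΘB ((probeSwap S PA PB).symm (y ⊗ₜ[ℂ] a)) =
      (probeSwap S PA PB).symm (ΘB y ⊗ₜ[ℂ] a) := by
  simp only [hatB, AlgEquiv.trans_apply, AlgEquiv.apply_symm_apply]
  rfl

lemma idTensorFunctional₂_tmul_one_mul_probeSwap_symm (σA : PA →ₗ[ℂ] ℂ) (σB : PB →ₗ[ℂ] ℂ)
    (x : S ⊗[ℂ] PA) (y : S ⊗[ℂ] PB) :
    idTensorFunctional₂ σA σB
      ((x ⊗ₜ[ℂ] (1 : PB)) * (probeSwap S PA PB).symm (y ⊗ₜ[ℂ] (1 : PA))) =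
      idTensorFunctional S σA x * idTensorFunctional S σB y := by
  induction x using TensorProduct.induction_on with
  | zero => simp
  | add x₁ x₂ h₁ h₂ => rw [TensorProduct.add_tmul, add_mul, map_add, h₁, h₂, map_add, add_mul]
  | tmul s a =>
    induction y using TensorProduct.induction_on with
    | zero => simp
    | add y₁ y₂ h₁ h₂ =>
      rw [TensorProduct.add_tmul, map_add, map_add, mul_add, map_add, h₁, h₂, mul_add]
    | tmul t b =>
      simp [idTensorFunctional₂, Algebra.TensorProduct.tmul_mul_tmul]

/-- For spacelike separated probes (expressed by commutation of the extended
scattering maps), the induced observable of the combined probe observable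
`O_A ⊗ O_B` is the product of the individual induced observables:
`(id_S ⊗ σ_A ⊗ σ_B)((Θ̂_A ∘ Θ̂_B)(1 ⊗ O_A ⊗ O_B)) = ε_A(O_A) * ε_B(O_B)`. -/
theorem induced_observable_of_combined_probe
    (σA : PA →ₗ[ℂ] ℂ) (σB : PB →ₗ[ℂ] ℂ)
    (ΘA : (S ⊗[ℂ] PA) ≃ₐ[ℂ] (S ⊗[ℂ] PA)) (ΘB : (S ⊗[ℂ] PB) ≃ₐ[ℂ] (S ⊗[ℂ] PB))
    (hcomm : ∀ x : (S ⊗[ℂ] PA) ⊗[ℂ] PB,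
      (hatA ΘA) ((hatB ΘB) x) = (hatB ΘB) ((hatA ΘA) x))
    (OA : PA) (OB : PB) :
    idTensorFunctional₂ σA σB
      ((hatA ΘA) ((hatB ΘB) (((1 : S) ⊗ₜ[ℂ] OA) ⊗ₜ[ℂ] OB)))
    = inducedObservable σA ΘA OA * inducedObservable σB ΘB OB := by
  set X : (S ⊗[ℂ] PA) ⊗[ℂ] PB := ((1 : S) ⊗ₜ[ℂ] OA) ⊗ₜ[ℂ] (1 : PB)
  set Y : (S ⊗[ℂ] PA) ⊗[ℂ] PB := (probeSwap S PA PB).symm (((1 : S) ⊗ₜ[ℂ] OB) ⊗ₜ[ℂ] (1 : PA))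
  have hsplit : ((1 : S) ⊗ₜ[ℂ] OA) ⊗ₜ[ℂ] OB = X * Y := by
    simp [X, Y, Algebra.TensorProduct.tmul_mul_tmul]
  have hBX : hatB ΘB X = X := by
    have hX : X = (probeSwap S PA PB).symm ((1 : S ⊗[ℂ] PB) ⊗ₜ[ℂ] OA) := by
      simp [X, Algebra.TensorProduct.one_def]
    rw [hX, hatB_probeSwap_symm_tmul, map_one]
  have hAY : hatA ΘA Y = Y := by
    have hY : Y = (1 : S ⊗[ℂ] PA) ⊗ₜ[ℂ] OB := by
      simp [Y, Algebra.TensorProduct.one_def]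
    rw [hY, hatA_tmul, map_one]
  have hAB : hatA ΘA (hatB ΘB (X * Y)) = hatA ΘA X * hatB ΘB Y := by
    rw [map_mul, hBX, map_mul, hcomm, hAY]
  rw [hsplit, hAB, hatA_tmul, hatB_probeSwap_symm_tmul,
    idTensorFunctional₂_tmul_one_mul_probeSwap_symm]
  rfl

end
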